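/- Suppose Q = Q^{V'}_{D,κ} is the forcing for embedding Prikry names of graphs, defined in V'. Then for every α < Υ and a ∈ κ⁺, the set K_{a,α} = {p ∈ Q : α ∈ u^p and a ∈ Dom(f^p_α)} is dense open in Q. -/

import Mathlib

/-!
Formalization of statements from:
M. Dzamonja, S. Shelah, "Universal graphs at the successor of a singular cardinal".

Forcing-theoretic notions (names, generic filters, forcing extensions, elementary
embeddings) that are not available in Mathlib are represented by abstract data
bundled into structures, with their governing properties stated as hypotheses,
mirroring the natural-language statement as closely as possible.
-/

universe u

open Cardinal Set

/-- Two conditions are compatible: they have a common extension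
(`le p q` means that `q` is a stronger condition than `p`). -/
def Compat {P : Type*} (le : P → P → Prop) (p q : P) : Prop :=
  ∃ r, le p r ∧ le q r

/-- Compatibility witnessed inside a given suborder `M`. -/
def CompatIn {P : Type*} (le : P → P → Prop) (M : Set P) (p q : P) : Prop :=
  ∃ r ∈ M, le p r ∧ le q r

/-- `A` is an antichain with respect to the extension relation `le`. -/
def AntichainIn {P : Type*} (le : P → P → Prop) (A : Set P) : Prop :=
  ∀ p ∈ A, ∀ q ∈ A, p ≠ q → ¬ Compat le p q

/-- The `θ`-chain condition: every antichain has size `< θ`. -/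
def ChainCond (θ : Cardinal.{u}) {P : Type u} (le : P → P → Prop) : Prop :=
  ∀ A : Set P, AntichainIn le A → #A < θ

/-- `(<κ)`-directed-closed: every (nonempty) `le`-directed family of conditions of
size `< κ` has a common upper bound. -/
def DirectedClosed (κ : Cardinal.{u}) {P : Type u} (le : P → P → Prop) : Prop :=
  ∀ s : Set P, s.Nonempty → DirectedOn le s → #s < κ → ∃ b, ∀ p ∈ s, le p b

/-- `f` is a complete embedding of the suborder `M` into the suborder `N`
(both inside one ambient class of conditions ordered by `le`): it maps `M` into `N`,
preserves order and compatibility, and maximal antichains of `M` stay predense in `N`. -/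
def IsCompleteEmbeddingIn {P : Type u} (le : P → P → Prop) (M N : Set P) (f : P → P) : Prop :=
  (∀ a ∈ M, f a ∈ N) ∧
  (∀ a ∈ M, ∀ b ∈ M, le a b → le (f a) (f b)) ∧
  (∀ a ∈ M, ∀ b ∈ M, CompatIn le N (f a) (f b) → CompatIn le M a b) ∧
  (∀ A ⊆ M, AntichainIn le A → (∀ b ∈ M, ∃ a ∈ A, CompatIn le M a b) →
    ∀ b ∈ N, ∃ a ∈ A, CompatIn le N (f a) b)

/-- `f` is a complete embedding of the forcing `(A, leA)` into the forcing `(B, leB)`. -/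
def IsCompleteEmbedding {A B : Type*} (leA : A → A → Prop) (leB : B → B → Prop)
    (f : A → B) : Prop :=
  (∀ a a', leA a a' → leB (f a) (f a')) ∧
  (∀ a a', Compat leB (f a) (f a') → Compat leA a a') ∧
  (∀ M : Set A, AntichainIn leA M → (∀ a, ∃ m ∈ M, Compat leA m a) →
    ∀ b, ∃ m ∈ M, Compat leB (f m) b)

/-- The cofinality of the point `i` of a linear order: the least cardinality of a
subset of `Set.Iio i` which is cofinal below `i`. -/
noncomputable def cofCard {ι : Type u} [LinearOrder ι] (i : ι) : Cardinal.{u} :=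
  sInf {c : Cardinal.{u} | ∃ s : Set ι, s ⊆ Set.Iio i ∧ (∀ j < i, ∃ k ∈ s, j ≤ k) ∧ #s = c}

/-- Club (closed unbounded) subsets of a linear order. -/
def IsClub' {ι : Type u} [LinearOrder ι] (C : Set ι) : Prop :=
  (∀ i : ι, ∃ j ∈ C, i < j) ∧
  (∀ i : ι, Order.IsSuccLimit i → (∀ j < i, ∃ k ∈ C, j < k ∧ k < i) → i ∈ C)

/-- A filter `G` generic over the ground model: downward closed, directed, and meeting
every dense set (of the ground model). -/
def IsGeneric {P : Type u} (le : P → P → Prop) (G : Set P) : Prop :=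
  (∀ p ∈ G, ∀ q, le q p → q ∈ G) ∧
  (∀ p ∈ G, ∀ q ∈ G, ∃ r ∈ G, le p r ∧ le q r) ∧
  (∀ Ds : Set P, (∀ p, ∃ q ∈ Ds, le p q) → (G ∩ Ds).Nonempty)

/-- The Prikry forcing `Pr(D)` for an ultrafilter `D` on the set `K` (representing the
measurable cardinal `κ`): conditions are pairs `(s, B)` where `s` is a finite subset
of `κ` and `B ∈ D` with `min(B) > max(s)`. -/
def PrCond (K : Type u) [LinearOrder K] (D : Ultrafilter K) : Type u :=
  {c : Finset K × Set K // c.2 ∈ D ∧ ∀ a ∈ c.1, ∀ b ∈ c.2, a < b}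

/-- extension in the Prikry forcing: `(s, B) ≤ (t, C)` iff `s` is an initial segment
of `t`, `t \ s ⊆ B`, and `C ⊆ B`. -/
def PrLE {K : Type u} [LinearOrder K] {D : Ultrafilter K} (c d : PrCond K D) : Prop :=
  c.1.1 ⊆ d.1.1 ∧ (∀ b ∈ d.1.1, b ∉ c.1.1 → ∀ a ∈ c.1.1, a < b) ∧
  (↑d.1.1 \ ↑c.1.1 : Set K) ⊆ c.1.2 ∧ d.1.2 ⊆ c.1.2

/-- `D` is a normal (`κ`-complete, uniform) ultrafilter on the set `K` of size `κ`:
closed under intersections of `< κ` many members, containing all final segments, and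
every regressive function is constant on a member of `D`. -/
def IsNormalUF (κ : Cardinal.{u}) (K : Type u) [LinearOrder K] (D : Ultrafilter K) : Prop :=
  (∀ T : Set (Set K), #T < κ → (∀ B ∈ T, B ∈ D) → ⋂₀ T ∈ D) ∧
  (∀ x : K, {y : K | x < y} ∈ D) ∧
  (∀ f : K → K, {x : K | f x < x} ∈ D → ∃ c : K, {x : K | f x = c} ∈ D)

/-- The fixed list `⟨M̃_α = ⟨κ⁺, R̃_α⟩ : α < Υ⟩` of all canonical `Pr(D)`-names of
graphs on `κ⁺`, represented through the forcing relation of the Prikry forcing: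
`frc w B α x y b` says that the Prikry condition `⟨w, B⟩` forces
`M̃_α ⊨ R̃_α(x, y) = b`.  `O` is a set representing `κ⁺` and `TΥ` one representing `Υ`. -/
structure PrikryGraphNames (K : Type u) [LinearOrder K] (D : Ultrafilter K)
    (O : Type u) (TΥ : Type u) : Type (u + 1) where
  frc : Finset K → Set K → TΥ → O → O → Bool → Prop
  frc_mono : ∀ {w w' : Finset K} {B B' : Set K} {α : TΥ} {x y : O} {b : Bool},
      frc w B α x y b → w ⊆ w' → (↑w' \ ↑w : Set K) ⊆ B → B' ⊆ B → frc w' B' α x y b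
  frc_consistent : ∀ {w : Finset K} {B : Set K} {α : TΥ} {x y : O},
      B ∈ D → ¬ (frc w B α x y true ∧ frc w B α x y false)
  /-- the Prikry property: a condition can be decided by shrinking the measure-one set -/
  prikry_dec : ∀ (w : Finset K) (B : Set K) (α : TΥ) (x y : O), B ∈ D →
      ∃ B' ∈ D, B' ⊆ B ∧ (frc w B' α x y true ∨ frc w B' α x y false)

/-- Definition 3.5: the forcing `Q = Q^{V'}_{D,κ}` for embedding Prikry names of graphs.
`η : TΥ → O → Bool` is the sequence of `Υ` distinct branches added by `Q₀`; the value
`η_α ↾ ζ` is represented as the partial function `fun x => if x < ζ then some (η α x)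
else none`.  A condition is `p = ⟨A^p, B^p, u^p, ⟨f^p_α : α ∈ u^p⟩⟩` as in the paper;
here `supp` stands for `u^p`. -/
structure QCond (κ : Cardinal.{u}) (K O TΥ : Type u) [LinearOrder K] [LinearOrder O]
    (D : Ultrafilter K) (η : TΥ → O → Bool)
    (N : PrikryGraphNames K D O TΥ) : Type u where
  A : Set K
  B : Set K
  supp : Set TΥ
  f : TΥ → O → Option ((O → Option Bool) × K)
  /-- `A ∈ [κ]^{<κ}` -/
  A_small : #A < κ
  /-- `B ∈ D` -/
  B_mem : B ∈ D
  /-- `B ⊆ κ \ sup(A)` -/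
  B_above : ∀ a ∈ A, ∀ b ∈ B, a ≤ b
  /-- `u ∈ [Υ]^{<κ}` -/
  supp_small : #supp < κ
  f_dom : ∀ α : TΥ, α ∉ supp → ∀ ζ : O, f α ζ = none
  /-- `|Dom(f_α)| < κ` -/
  f_small : ∀ α ∈ supp, #{ζ : O | f α ζ ≠ none} < κ
  /-- each `f_α` is one-to-one -/
  f_inj : ∀ α ∈ supp, ∀ (ζ₁ ζ₂ : O) v, f α ζ₁ = some v → f α ζ₂ = some v → ζ₁ = ζ₂
  /-- `f_α` maps `ζ` into `{η_α ↾ ζ} × κ` -/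
  f_val : ∀ α ∈ supp, ∀ (ζ : O) v, f α ζ = some v →
      v.1 = fun x : O => if x < ζ then some (η α x) else none
  /-- clause (v): joint values force agreement of the named graph relations, and
  `⟨w, B⟩` decides the relevant instances of `R̃_α` -/
  coh : ∀ α ∈ supp, ∀ β ∈ supp, ∀ (x' x'' y' y'' : O) (v v' : (O → Option Bool) × K),
      f α x' = some v → f β y' = some v → f α x'' = some v' → f β y'' = some v' →
      v ≠ v' → ∀ w : Finset K, ↑w ⊆ A →
        (∀ b : Bool, N.frc w B α x' x'' b ↔ N.frc w B β y' y'' b) ∧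
        (N.frc w B α x' x'' true ∨ N.frc w B α x' x'' false)

/-- the order on `Q`: `p ≤ q` iff `A^p` is an initial segment of `A^q`,
`A^q \ A^p ⊆ B^p`, `B^q ⊆ B^p`, `u^p ⊆ u^q`, and `f^p_α ⊆ f^q_α` for `α ∈ u^p`. -/
def QLE {κ : Cardinal.{u}} {K O TΥ : Type u} [LinearOrder K] [LinearOrder O]
    {D : Ultrafilter K} {η : TΥ → O → Bool} {N : PrikryGraphNames K D O TΥ}
    (p q : QCond κ K O TΥ D η N) : Prop :=
  p.A ⊆ q.A ∧ (∀ b ∈ q.A, b ∉ p.A → ∀ a ∈ p.A, a < b) ∧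
  q.A \ p.A ⊆ p.B ∧ q.B ⊆ p.B ∧ p.supp ⊆ q.supp ∧
  ∀ α ∈ p.supp, ∀ (ζ : O) v, p.f α ζ = some v → q.f α ζ = some v

section Auxiliary

open Classical in
/-- The collection of finite subsets of a set of size `< κ` has size `< κ`
(for uncountable `κ`). -/
private lemma mk_finsets_lt {κ : Cardinal.{u}} {K : Type u} (hκ : ℵ₀ < κ) (A : Set K)
    (hA : #A < κ) : #{w : Finset K // ↑w ⊆ A} < κ := by
  have hinj : Function.Injective (fun w : {w : Finset K // ↑w ⊆ A} =>
      w.1.subtype (· ∈ A)) := by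
    intro w w' h
    apply Subtype.ext
    ext x
    by_cases hx : x ∈ A
    · have := Finset.ext_iff.1 h ⟨x, hx⟩
      simpa [Finset.mem_subtype] using this
    · exact iff_of_false (fun hxx => hx (w.2 hxx)) (fun hxx => hx (w'.2 hxx))
  have hle := Cardinal.mk_le_of_injective hinj
  rcases lt_or_ge (#A) ℵ₀ with h | h
  · have : Finite A := Cardinal.lt_aleph0_iff_finite.1 h
    have : Fintype A := Fintype.ofFinite _
    exact hle.trans_lt ((Cardinal.lt_aleph0_of_finite (Finset A)).trans hκ)
  · have : Infinite A := Cardinal.infinite_iff.2 h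
    rw [Cardinal.mk_finset_of_infinite] at hle
    exact hle.trans_lt hA

private lemma frc_shrink {K O TΥ : Type u} [LinearOrder K] {D : Ultrafilter K}
    (N : PrikryGraphNames K D O TΥ) {w : Finset K} {B B' : Set K}
    {α : TΥ} {x x' : O} {b : Bool} (h : N.frc w B α x x' b) (hsub : B' ⊆ B) :
    N.frc w B' α x x' b :=
  N.frc_mono h (Finset.Subset.refl w) (by simp) hsub

/-- Transfer of the coherence conclusion to a smaller measure-one set. -/
private lemma frc_transfer {K O TΥ : Type u} [LinearOrder K] {D : Ultrafilter K}
    (N : PrikryGraphNames K D O TΥ) {w : Finset K} {B B' : Set K}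
    {α β : TΥ} {x x' y y' : O} (hB' : B' ∈ D) (hsub : B' ⊆ B)
    (h1 : ∀ b, N.frc w B α x x' b ↔ N.frc w B β y y' b)
    (h2 : N.frc w B α x x' true ∨ N.frc w B α x x' false) :
    (∀ b, N.frc w B' α x x' b ↔ N.frc w B' β y y' b) ∧
    (N.frc w B' α x x' true ∨ N.frc w B' α x x' false) := by
  obtain ⟨b, hb⟩ : ∃ b, N.frc w B α x x' b := by
    rcases h2 with h | h
    exacts [⟨_, h⟩, ⟨_, h⟩]
  have hβ : N.frc w B β y y' b := (h1 b).1 hb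
  have hb' : N.frc w B' α x x' b := frc_shrink N hb hsub
  have hβ' : N.frc w B' β y y' b := frc_shrink N hβ hsub
  refine ⟨fun c => ⟨fun hc => ?_, fun hc => ?_⟩, ?_⟩
  · obtain rfl : c = b := by
      by_contra hcb
      apply N.frc_consistent hB' (w := w) (α := α) (x := x) (y := x')
      cases b <;> cases c <;>
        first
          | exact absurd rfl hcb
          | exact ⟨hc, hb'⟩
          | exact ⟨hb', hc⟩
    exact hβ'
  · obtain rfl : c = b := by
      by_contra hcb
      apply N.frc_consistent hB' (w := w) (α := β) (x := y) (y := y')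
      cases b <;> cases c <;>
        first
          | exact absurd rfl hcb
          | exact ⟨hc, hβ'⟩
          | exact ⟨hβ', hc⟩
    exact hb'
  · cases b
    · exact Or.inr hb'
    · exact Or.inl hb'

end Auxiliary

/-- Claim 3.7 (3): for every `α < Υ` and `a ∈ κ⁺`, the set
`K_{a,α} = {p ∈ Q : α ∈ u^p ∧ a ∈ Dom(f^p_α)}` is dense and open in `Q`. -/
theorem statement12
    (κ Υ : Cardinal.{u}) {K O TΥ : Type u} [LinearOrder K] [LinearOrder O]
    (hκ : ℵ₀ < κ) (hκreg : κ.IsRegular)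
    (hK : #K = κ) (hO : #O = Order.succ κ) (hTΥ : #TΥ = Υ)
    (h2κ : 2 ^ Order.succ κ ≤ Υ)
    (D : Ultrafilter K) (hD : IsNormalUF κ K D)
    (η : TΥ → O → Bool) (hη : Function.Injective η)
    (N : PrikryGraphNames K D O TΥ)
    (α : TΥ) (a : O) :
    (∀ p : QCond κ K O TΥ D η N,
      ∃ q : QCond κ K O TΥ D η N, QLE p q ∧ α ∈ q.supp ∧ q.f α a ≠ none) ∧
    (∀ p q : QCond κ K O TΥ D η N, α ∈ p.supp → p.f α a ≠ none → QLE p q →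
      α ∈ q.supp ∧ q.f α a ≠ none) := by
  classical
  have hκ0 : (0 : Cardinal) < #K := by rw [hK]; exact aleph0_pos.trans hκ
  obtain ⟨k₀⟩ : Nonempty K := Cardinal.mk_ne_zero_iff.1 hκ0.ne'
  constructor
  · intro p
    have hmem : ∀ β ζ (v : (O → Option Bool) × K), p.f β ζ = some v → β ∈ p.supp := by
      intro β ζ v h
      by_contra hb
      rw [p.f_dom β hb ζ] at h
      cases h
    by_cases hdone : α ∈ p.supp ∧ p.f α a ≠ none
    · exact ⟨p, ⟨subset_rfl, fun b hb hnb => absurd hb hnb, by simp, subset_rfl, subset_rfl,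
        fun _ _ _ _ h => h⟩, hdone.1, hdone.2⟩
    · have hnone : p.f α a = none := by
        by_cases hα : α ∈ p.supp
        · by_contra h
          exact hdone ⟨hα, h⟩
        · exact p.f_dom α hα a
      -- the domain of `f_α`
      set dα : Set O := {ζ : O | p.f α ζ ≠ none} with hdαdef
      have hdκ : #dα < κ := by
        by_cases hα : α ∈ p.supp
        · exact p.f_small α hα
        · have he : dα = ∅ := by
            ext ζ
            simp [hdαdef, p.f_dom α hα]
          rw [he, Cardinal.mk_emptyCollection]
          exact aleph0_pos.trans hκ
      -- a fresh second coordinate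
      set S : Set K := {k : K | ∃ β ζ v, p.f β ζ = some v ∧ v.2 = k} with hSdef
      have hSsub : S ⊆ Set.range (fun x : Σ β : p.supp, {ζ : O // p.f β.1 ζ ≠ none} =>
          ((p.f x.1.1 x.2.1).getD ((fun _ => none : O → Option Bool), k₀)).2) := by
        rintro k ⟨β, ζ, v, hf, rfl⟩
        exact ⟨⟨⟨β, hmem β ζ v hf⟩, ⟨ζ, by simp [hf]⟩⟩, by simp [hf]⟩
      have hSκ : #S < κ := by
        refine ((Cardinal.mk_le_mk_of_subset hSsub).trans Cardinal.mk_range_le).trans_lt ?_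
        rw [Cardinal.mk_sigma]
        exact Cardinal.sum_lt_of_isRegular hκreg p.supp_small (fun i => p.f_small i.1 i.2)
      have hSne : S ≠ Set.univ := by
        intro h
        rw [h, Cardinal.mk_univ, hK] at hSκ
        exact lt_irrefl _ hSκ
      obtain ⟨c, hc⟩ := (Set.ne_univ_iff_exists_notMem S).1 hSne
      set v₀ : (O → Option Bool) × K :=
        ((fun x : O => if x < a then some (η α x) else none), c) with hv₀def
      have hfresh : ∀ β ζ (v : (O → Option Bool) × K), p.f β ζ = some v → v ≠ v₀ := by
        intro β ζ v h hv
        exact hc ⟨β, ζ, v, h, by rw [hv]⟩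
      -- shrink the measure-one set to decide all new instances
      set W : Type u := {w : Finset K // ↑w ⊆ p.A} with hWdef
      have hWκ : #W < κ := mk_finsets_lt hκ p.A p.A_small
      choose B1 hB1D hB1 using fun i : W × ↥dα => N.prikry_dec i.1.1 p.B α a i.2.1 p.B_mem
      choose B2 hB2D hB2 using fun i : W × ↥dα => N.prikry_dec i.1.1 p.B α i.2.1 a p.B_mem
      set T : Set (Set K) := insert p.B (Set.range B1 ∪ Set.range B2) with hTdef
      have hIκ : #(W × ↥dα) < κ := by
        rw [Cardinal.mk_prod, Cardinal.lift_id, Cardinal.lift_id]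
        exact Cardinal.mul_lt_of_lt hκreg.aleph0_le hWκ hdκ
      have hTκ : #T < κ := by
        refine Cardinal.mk_insert_le.trans_lt ?_
        refine Cardinal.add_lt_of_lt hκreg.aleph0_le ?_ (Cardinal.one_lt_aleph0.trans hκ)
        refine (Cardinal.mk_union_le _ _).trans_lt ?_
        exact Cardinal.add_lt_of_lt hκreg.aleph0_le
          (Cardinal.mk_range_le.trans_lt hIκ) (Cardinal.mk_range_le.trans_lt hIκ)
      set Bq : Set K := ⋂₀ T with hBqdef
      have hBqD : Bq ∈ D := by
        refine hD.1 T hTκ ?_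
        intro B hB
        simp only [hTdef, Set.mem_insert_iff, Set.mem_union, Set.mem_range] at hB
        rcases hB with rfl | ⟨i, rfl⟩ | ⟨i, rfl⟩
        exacts [p.B_mem, hB1D i, hB2D i]
      have hBqB : Bq ⊆ p.B := Set.sInter_subset_of_mem (Set.mem_insert _ _)
      have hBq1 : ∀ i, Bq ⊆ B1 i := fun i =>
        Set.sInter_subset_of_mem (Set.mem_insert_of_mem _ (Set.mem_union_left _ ⟨i, rfl⟩))
      have hBq2 : ∀ i, Bq ⊆ B2 i := fun i =>
        Set.sInter_subset_of_mem (Set.mem_insert_of_mem _ (Set.mem_union_right _ ⟨i, rfl⟩))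
      have hdec1 : ∀ (w : W) (x : ↥dα),
          N.frc w.1 Bq α a x.1 true ∨ N.frc w.1 Bq α a x.1 false := by
        intro w x
        rcases (hB1 (w, x)).2 with h | h
        · exact Or.inl (frc_shrink N h (hBq1 (w, x)))
        · exact Or.inr (frc_shrink N h (hBq1 (w, x)))
      have hdec2 : ∀ (w : W) (x : ↥dα),
          N.frc w.1 Bq α x.1 a true ∨ N.frc w.1 Bq α x.1 a false := by
        intro w x
        rcases (hB2 (w, x)).2 with h | h
        · exact Or.inl (frc_shrink N h (hBq2 (w, x)))
        · exact Or.inr (frc_shrink N h (hBq2 (w, x)))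
      -- the characterization of the new condition's functions
      have hF : ∀ β ζ (v : (O → Option Bool) × K),
          (if β = α ∧ ζ = a then some v₀ else p.f β ζ) = some v ↔
          ((β = α ∧ ζ = a) ∧ v = v₀) ∨ p.f β ζ = some v := by
        intro β ζ v
        by_cases h : β = α ∧ ζ = a
        · obtain ⟨rfl, rfl⟩ := h
          simp [hnone, eq_comm]
        · simp [h]
      refine ⟨{ A := p.A, B := Bq, supp := insert α p.supp,
                f := fun β ζ => if β = α ∧ ζ = a then some v₀ else p.f β ζ,
                A_small := p.A_small, B_mem := hBqD,
                B_above := fun x hx b hb => p.B_above x hx b (hBqB hb),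
                supp_small := ?_, f_dom := ?_, f_small := ?_,
                f_inj := ?_, f_val := ?_, coh := ?_ }, ?_, ?_, ?_⟩
      · exact Cardinal.mk_insert_le.trans_lt
          (Cardinal.add_lt_of_lt hκreg.aleph0_le p.supp_small (Cardinal.one_lt_aleph0.trans hκ))
      · intro β hβ ζ
        have h1 : ¬(β = α ∧ ζ = a) := fun h => hβ (h.1 ▸ Set.mem_insert _ _)
        have h2 : β ∉ p.supp := fun h => hβ (Set.mem_insert_of_mem _ h)
        simp [h1, p.f_dom β h2]
      · intro β hβ
        by_cases hβα : β = α
        · subst hβα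
          have hsub2 : {ζ : O | (if β = β ∧ ζ = a then some v₀ else p.f β ζ) ≠ none}
              ⊆ insert a dα := by
            intro ζ hζ
            by_cases hz : ζ = a
            · exact hz ▸ Set.mem_insert _ _
            · refine Set.mem_insert_of_mem _ ?_
              simp only [Set.mem_setOf_eq, hz, and_false, if_false] at hζ
              exact hζ
          refine (Cardinal.mk_le_mk_of_subset hsub2).trans_lt ?_
          exact Cardinal.mk_insert_le.trans_lt
            (Cardinal.add_lt_of_lt hκreg.aleph0_le hdκ (Cardinal.one_lt_aleph0.trans hκ))
        · have h2 : β ∈ p.supp := by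
            rcases hβ with h | h
            · exact absurd h hβα
            · exact h
          have he : {ζ : O | (if β = α ∧ ζ = a then some v₀ else p.f β ζ) ≠ none}
              = {ζ : O | p.f β ζ ≠ none} := by
            ext ζ
            simp [hβα]
          rw [he]
          exact p.f_small β h2
      · intro β hβ ζ₁ ζ₂ v h1 h2
        have h1' := (hF β ζ₁ v).1 h1
        have h2' := (hF β ζ₂ v).1 h2
        rcases h1' with ⟨⟨_, rfl⟩, rfl⟩ | h1o
        · rcases h2' with ⟨⟨_, rfl⟩, _⟩ | h2o
          · rfl
          · exact absurd rfl (hfresh _ _ _ h2o)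
        · rcases h2' with ⟨⟨_, rfl⟩, rfl⟩ | h2o
          · exact absurd rfl (hfresh _ _ _ h1o)
          · exact p.f_inj β (hmem β ζ₁ v h1o) ζ₁ ζ₂ v h1o h2o
      · intro β hβ ζ v h
        rcases (hF β ζ v).1 h with ⟨⟨rfl, rfl⟩, rfl⟩ | ho
        · rfl
        · exact p.f_val β (hmem β ζ v ho) ζ v ho
      · intro α' hα' β' hβ' x' x'' y' y'' v v' h1 h2 h3 h4 hvv' w hw
        have h1' := (hF α' x' v).1 h1
        have h2' := (hF β' y' v).1 h2
        have h3' := (hF α' x'' v').1 h3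
        have h4' := (hF β' y'' v').1 h4
        by_cases hv : v = v₀
        · -- the pair `v` is the new value
          obtain ⟨⟨e1, e1b⟩, -⟩ : (α' = α ∧ x' = a) ∧ v = v₀ := by
            rcases h1' with h | h
            · exact h
            · exact absurd hv (hfresh _ _ _ h)
          obtain ⟨⟨e2, e2b⟩, -⟩ : (β' = α ∧ y' = a) ∧ v = v₀ := by
            rcases h2' with h | h
            · exact h
            · exact absurd hv (hfresh _ _ _ h)
          have h3o : p.f α' x'' = some v' := by
            rcases h3' with ⟨-, h⟩ | h
            · exact absurd (hv.trans h.symm) hvv'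
            · exact h
          have h4o : p.f β' y'' = some v' := by
            rcases h4' with ⟨-, h⟩ | h
            · exact absurd (hv.trans h.symm) hvv'
            · exact h
          rw [e1] at h3o
          rw [e2] at h4o
          have exy : x'' = y'' :=
            p.f_inj α (hmem α x'' v' h3o) x'' y'' v' h3o h4o
          have hx'' : x'' ∈ dα := by simp [hdαdef, h3o]
          rw [e1, e1b, e2, e2b, ← exy]
          exact ⟨fun b => Iff.rfl, hdec1 ⟨w, hw⟩ ⟨x'', hx''⟩⟩
        · by_cases hv' : v' = v₀
          · -- the pair `v'` is the new value
            obtain ⟨⟨e3, e3b⟩, -⟩ : (α' = α ∧ x'' = a) ∧ v' = v₀ := by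
              rcases h3' with h | h
              · exact h
              · exact absurd hv' (hfresh _ _ _ h)
            obtain ⟨⟨e4, e4b⟩, -⟩ : (β' = α ∧ y'' = a) ∧ v' = v₀ := by
              rcases h4' with h | h
              · exact h
              · exact absurd hv' (hfresh _ _ _ h)
            have h1o : p.f α' x' = some v := by
              rcases h1' with ⟨-, h⟩ | h
              · exact absurd h hv
              · exact h
            have h2o : p.f β' y' = some v := by
              rcases h2' with ⟨-, h⟩ | h
              · exact absurd h hv
              · exact h
            rw [e3] at h1o
            rw [e4] at h2o
            have exy : x' = y' :=
              p.f_inj α (hmem α x' v h1o) x' y' v h1o h2o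
            have hx' : x' ∈ dα := by simp [hdαdef, h1o]
            rw [e3, e3b, e4, e4b, ← exy]
            exact ⟨fun b => Iff.rfl, hdec2 ⟨w, hw⟩ ⟨x', hx'⟩⟩
          · -- both values are old
            have h1o : p.f α' x' = some v := by
              rcases h1' with ⟨-, h⟩ | h
              · exact absurd h hv
              · exact h
            have h2o : p.f β' y' = some v := by
              rcases h2' with ⟨-, h⟩ | h
              · exact absurd h hv
              · exact h
            have h3o : p.f α' x'' = some v' := by
              rcases h3' with ⟨-, h⟩ | h
              · exact absurd h hv'
              · exact h
            have h4o : p.f β' y'' = some v' := by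
              rcases h4' with ⟨-, h⟩ | h
              · exact absurd h hv'
              · exact h
            have hcoh := p.coh α' (hmem α' x' v h1o) β' (hmem β' y' v h2o)
              x' x'' y' y'' v v' h1o h2o h3o h4o hvv' w hw
            exact frc_transfer N hBqD hBqB hcoh.1 hcoh.2
      · refine ⟨subset_rfl, fun b hb hnb => absurd hb hnb, by simp, hBqB,
          Set.subset_insert _ _, ?_⟩
        intro β hβ ζ v hv
        have hne : ¬(β = α ∧ ζ = a) := by
          rintro ⟨rfl, rfl⟩
          rw [hnone] at hv
          cases hv
        show (if β = α ∧ ζ = a then some v₀ else p.f β ζ) = some v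
        rw [if_neg hne]
        exact hv
      · exact Set.mem_insert _ _
      · show (if α = α ∧ a = a then some v₀ else p.f α a) ≠ none
        rw [if_pos ⟨rfl, rfl⟩]
        exact fun h => by cases h
  · intro p q hα hfa hle
    obtain ⟨v, hv⟩ := Option.ne_none_iff_exists'.1 hfa
    refine ⟨hle.2.2.2.2.1 hα, ?_⟩
    rw [hle.2.2.2.2.2 α hα a v hv]
    exact fun h => by cases h
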